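/- arXiv:1311.4476 — 2 statements merged into one kernel-verified Lean document; each statement's English description precedes it below -/
import Mathlib

section
/- A finite simple graph G is Roman saturated if and only if for every pair of vertices v, w with [v,w] ∉ E(G) there exists a minimal Roman partition (V_0; V_1; V_2) of G such that either v ∈ V_1 and w ∈ V_2, or w ∈ V_1 and v ∈ V_2. -/
/-!
Adding the edge `vw` lowers `γ_R` by at most one. If `r` is a minimal Roman function with
`r v = 1` and `r w = 2`, then lowering `v` to `0` gives a Roman function of `G + vw`, so `γ_R`
drops by one. Conversely, a minimal Roman function of `G + vw` of weight `γ_R(G) - 1` cannot be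
Roman on `G`, so some endpoint, say `v`, has value `0` and is dominated only by `w` through the
new edge; raising `v` to `1` gives a minimal Roman function of `G` with `r v = 1`, `r w = 2`.
-/

open SimpleGraph

/-- A Roman domination function on `G`. -/
def IsRomanFn {V : Type*} (G : SimpleGraph V) (r : V → Fin 3) : Prop :=
  ∀ u, r u = 0 → ∃ v, G.Adj u v ∧ r v = 2

/-- The weight of a Roman domination function. -/
noncomputable def romanWeight {V : Type*} [Fintype V] (r : V → Fin 3) : ℕ :=
  ∑ u, (r u : ℕ)

/-- The Roman domination number of `G`. -/
noncomputable def romanNumber {V : Type*} [Fintype V] (G : SimpleGraph V) : ℕ :=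
  sInf {w | ∃ r : V → Fin 3, IsRomanFn G r ∧ romanWeight r = w}

/-- `G` is vertex critical. -/
def VCritical {V : Type*} [Fintype V] [DecidableEq V] (G : SimpleGraph V) : Prop :=
  ∀ v : V, romanNumber (G.induce {u | u ≠ v}) = romanNumber G - 1

/-- `G` is edge critical. -/
def ECritical {V : Type*} [Fintype V] [DecidableEq V] (G : SimpleGraph V) : Prop :=
  VCritical G ∧ ∀ e ∈ G.edgeSet, ¬ VCritical (G.deleteEdges {e})

/-- `G` is Roman saturated. -/
def RomanSaturated {V : Type*} [Fintype V] (G : SimpleGraph V) : Prop :=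
  ∀ v w : V, v ≠ w → ¬ G.Adj v w →
    romanNumber (G ⊔ SimpleGraph.fromEdgeSet {s(v, w)}) = romanNumber G - 1

/-- `v` is a cut vertex of `G`. -/
def IsCutVertex {V : Type*} [Fintype V] [DecidableEq V] (G : SimpleGraph V) (v : V) : Prop :=
  Nat.card G.ConnectedComponent < Nat.card (G.induce {u | u ≠ v}).ConnectedComponent

open Function Finset

section

variable {V : Type*} [Fintype V]

lemma romanWeight_update_add [DecidableEq V] (r : V → Fin 3) (u : V) (a : Fin 3) :
    romanWeight (update r u a) + r u = romanWeight r + a := by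
  unfold romanWeight
  rw [← add_sum_erase _ _ (mem_univ u), ← add_sum_erase _ (fun x => (r x : ℕ)) (mem_univ u),
    sum_congr rfl fun x hx => by rw [update_of_ne (ne_of_mem_erase hx)], update_self]
  ring

lemma romanWeight_pos [Nonempty V] {G : SimpleGraph V} {r : V → Fin 3} (hr : IsRomanFn G r) :
    0 < romanWeight r := by
  by_contra! h
  have hzero : ∀ x, r x = 0 := fun x =>
    Fin.ext (sum_eq_zero_iff.mp (Nat.le_zero.mp h) x (mem_univ x))
  obtain ⟨z, -, hz⟩ := hr (Classical.arbitrary V) (hzero _)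
  simp [hzero z] at hz

lemma exists_romanWeight_eq_romanNumber (G : SimpleGraph V) :
    ∃ r : V → Fin 3, IsRomanFn G r ∧ romanWeight r = romanNumber G :=
  Nat.sInf_mem (s := {w | ∃ r : V → Fin 3, IsRomanFn G r ∧ romanWeight r = w})
    ⟨_, fun _ => 1, fun _ h => absurd h one_ne_zero, rfl⟩

lemma romanNumber_le_romanWeight {G : SimpleGraph V} {r : V → Fin 3} (hr : IsRomanFn G r) :
    romanNumber G ≤ romanWeight r :=
  Nat.sInf_le ⟨r, hr, rfl⟩

lemma romanNumber_pos [Nonempty V] (G : SimpleGraph V) : 0 < romanNumber G := by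
  obtain ⟨r, hr, hrw⟩ := exists_romanWeight_eq_romanNumber G
  exact hrw ▸ romanWeight_pos hr

end

section

variable {V : Type*} {G : SimpleGraph V} {r : V → Fin 3} {v w : V}

lemma IsRomanFn.update_zero_sup_edge [DecidableEq V] (hr : IsRomanFn G r) (hv : r v = 1)
    (hw : r w = 2) : IsRomanFn (G ⊔ edge v w) (update r v 0) := by
  have hvw : v ≠ w := fun h => by simp [h, hw] at hv
  intro x hx
  by_cases hxv : x = v
  · subst hxv
    exact ⟨w, Or.inr ((edge_adj ..).mpr ⟨Or.inl ⟨rfl, rfl⟩, hvw⟩), by rwa [update_of_ne hvw.symm]⟩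
  · obtain ⟨z, hxz, hz⟩ := hr x (by rwa [update_of_ne hxv] at hx)
    have hzv : z ≠ v := by rintro rfl; simp [hv] at hz
    exact ⟨z, Or.inl hxz, by rwa [update_of_ne hzv]⟩

lemma IsRomanFn.update_one_of_sup_edge [DecidableEq V] (hr : IsRomanFn (G ⊔ edge v w) r)
    (hv : r v = 0) (hw : r w = 2) : IsRomanFn G (update r v 1) := by
  intro x hx
  have hxv : x ≠ v := by rintro rfl; simp at hx
  rw [update_of_ne hxv] at hx
  obtain ⟨z, hxz, hz⟩ := hr x hx
  have hzv : z ≠ v := by rintro rfl; simp [hv] at hz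
  refine ⟨z, ?_, by rwa [update_of_ne hzv]⟩
  rcases hxz with hxz | hxz
  · exact hxz
  · obtain ⟨⟨rfl, -⟩ | ⟨rfl, -⟩, -⟩ := (edge_adj ..).mp hxz
    · exact absurd rfl hxv
    · simp [hw] at hx

variable [Fintype V]

lemma IsRomanFn.exists_of_sup_edge (hr : IsRomanFn (G ⊔ edge v w) r)
    (hG : ¬IsRomanFn G r) :
    ∃ r' : V → Fin 3, IsRomanFn G r' ∧ romanWeight r' = romanWeight r + 1 ∧
      ((r' v = 1 ∧ r' w = 2) ∨ (r' w = 1 ∧ r' v = 2)) := by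
  classical
  obtain ⟨u, hu, hundom⟩ : ∃ u, r u = 0 ∧ ∀ y, G.Adj u y → r y ≠ 2 := by
    simpa [IsRomanFn] using hG
  obtain ⟨y, huy, hy⟩ := hr u hu
  have hnew : (edge v w).Adj u y := huy.resolve_left fun h => hundom y h hy
  have hyu : y ≠ u := by rintro rfl; simp [hu] at hy
  have hweight : romanWeight (update r u 1) = romanWeight r + 1 := by
    simpa [hu] using romanWeight_update_add r u 1
  obtain ⟨⟨rfl, rfl⟩ | ⟨rfl, rfl⟩, -⟩ := (edge_adj ..).mp hnew
  · exact ⟨_, hr.update_one_of_sup_edge hu hy, hweight,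
      .inl ⟨update_self .., by rwa [update_of_ne hyu]⟩⟩
  · rw [edge_comm] at hr
    exact ⟨_, hr.update_one_of_sup_edge hu hy, hweight,
      .inr ⟨update_self .., by rwa [update_of_ne hyu]⟩⟩

lemma romanNumber_le_romanNumber_sup_edge_add_one (G : SimpleGraph V) (v w : V) :
    romanNumber G ≤ romanNumber (G ⊔ edge v w) + 1 := by
  obtain ⟨r, hr, hrw⟩ := exists_romanWeight_eq_romanNumber (G ⊔ edge v w)
  by_cases hG : IsRomanFn G r
  · exact hrw ▸ (romanNumber_le_romanWeight hG).trans (Nat.le_succ _)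
  · obtain ⟨r', hr', hr'w, -⟩ := hr.exists_of_sup_edge hG
    exact hrw ▸ hr'w ▸ romanNumber_le_romanWeight hr'

lemma romanNumber_sup_edge_add_one_le (hr : IsRomanFn G r) (hv : r v = 1) (hw : r w = 2) :
    romanNumber (G ⊔ edge v w) + 1 ≤ romanWeight r := by
  classical
  have hweight := romanWeight_update_add r v 0
  rw [hv] at hweight
  have := romanNumber_le_romanWeight (hr.update_zero_sup_edge hv hw)
  simp only [Fin.val_zero, add_zero, Fin.val_one] at hweight
  omega

end

/-- `G` is Roman saturated iff for every pair of nonadjacent vertices `v, w`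
there is a minimal Roman partition with `v ∈ V_1` and `w ∈ V_2`, or `w ∈ V_1` and
`v ∈ V_2`. -/
theorem romanSaturated_iff {V : Type*} [Fintype V] (G : SimpleGraph V) :
    RomanSaturated G ↔ ∀ v w : V, v ≠ w → ¬ G.Adj v w →
      ∃ r : V → Fin 3, IsRomanFn G r ∧ romanWeight r = romanNumber G ∧
        ((r v = 1 ∧ r w = 2) ∨ (r w = 1 ∧ r v = 2)) := by
  constructor
  · intro hsat v w hne hna
    have hdrop : romanNumber (G ⊔ edge v w) = romanNumber G - 1 := hsat v w hne hna
    have : Nonempty V := ⟨v⟩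
    have hpos := romanNumber_pos G
    obtain ⟨r, hr, hrw⟩ := exists_romanWeight_eq_romanNumber (G ⊔ edge v w)
    by_cases hG : IsRomanFn G r
    · have := romanNumber_le_romanWeight hG
      omega
    · obtain ⟨r', hr', hr'w, hpat⟩ := hr.exists_of_sup_edge hG
      exact ⟨r', hr', by omega, hpat⟩
  · intro h v w hne hna
    obtain ⟨r, hr, hrw, hpat⟩ := h v w hne hna
    have hdrop : romanNumber (G ⊔ edge v w) + 1 ≤ romanNumber G := by
      rcases hpat with ⟨hv, hw⟩ | ⟨hw, hv⟩
      · exact hrw ▸ romanNumber_sup_edge_add_one_le hr hv hw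
      · exact edge_comm v w ▸ hrw ▸ romanNumber_sup_edge_add_one_le hr hw hv
    have := romanNumber_le_romanNumber_sup_edge_add_one G v w
    change romanNumber (G ⊔ edge v w) = romanNumber G - 1
    omega
end

section
/- For every n ≥ 6, the graph X_n on vertices x_1, …, x_n, in which two distinct vertices x_i and x_j are adjacent if and only if j ≢ i + 2 (mod n) and j ≢ i − 2 (mod n), is a nonelementary v-critical graph with γ_R(X_n) = 4. -/
open SimpleGraph

/-- The graph `X_n` on vertices indexed by `ZMod n`: two distinct vertices `i, j` are
adjacent iff `j ≠ i + 2` and `j ≠ i - 2` (indices mod `n`). -/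
def Xgraph (n : ℕ) : SimpleGraph (ZMod n) where
  Adj i j := i ≠ j ∧ j ≠ i + 2 ∧ j ≠ i - 2
  symm := by
    constructor
    rintro i j ⟨h1, h2, h3⟩
    exact ⟨h1.symm, fun h => h3 (by rw [h]; ring), fun h => h2 (by rw [h]; ring)⟩
  loopless := by constructor; rintro i ⟨h1, -, -⟩; exact h1 rfl

/-!
The only non-neighbours of `x i` in `X_n` are `x (i ± 2)`. So `2` on `x 0, x 1` is a Roman
function of weight `4`, and in `X_n - v` so is `2` on `v + 2`, `1` on `v + 4` of weight `3`.
Conversely, a Roman function with a zero has a vertex `w` of value `2`, and every non-neighbour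
of `w` must carry weight itself or be dominated by a second vertex of value `2`. In `X_n` the
vertex `w` has two non-neighbours, forcing weight `4`; in `X_n - v` it keeps at least one,
forcing weight `3`. Functions without zeros weigh at least the number of vertices.
-/

lemma SimpleGraph.compl_induce_adj {V : Type*} {G : SimpleGraph V} {s : Set V} {a b : s}
    (h : Gᶜ.Adj a b) : (G.induce s)ᶜ.Adj a b :=
  (compl_adj _ _ _).mpr ⟨fun hab => h.ne (congrArg Subtype.val hab), h.2⟩

section Roman

variable {V : Type*} [Fintype V] {G : SimpleGraph V}

lemma sum_le_romanWeight (r : V → Fin 3) (s : Finset V) :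
    ∑ u ∈ s, (r u : ℕ) ≤ romanWeight r :=
  Finset.sum_le_sum_of_subset (Finset.subset_univ s)

lemma romanNumber_le {r : V → Fin 3} (hr : IsRomanFn G r) : romanNumber G ≤ romanWeight r :=
  Nat.sInf_le ⟨r, hr, rfl⟩

lemma le_romanNumber {k : ℕ} (h : ∀ r, IsRomanFn G r → k ≤ romanWeight r) :
    k ≤ romanNumber G :=
  le_csInf ⟨_, fun _ => 1, fun _ h => by simp at h, rfl⟩ fun _ ⟨r, hr, hw⟩ => hw ▸ h r hr

/-- The witness is weight `2` on `D`, `1` on `S` and `0` elsewhere. -/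
lemma romanNumber_le_of_dominating (D S : Finset V)
    (hD : ∀ u, u ∉ D → u ∉ S → ∃ v ∈ D, G.Adj u v) :
    romanNumber G ≤ 2 * D.card + S.card := by
  classical
  let r : V → Fin 3 := fun u => if u ∈ D then 2 else if u ∈ S then 1 else 0
  have hr : IsRomanFn G r := by
    intro u hu
    have huD : u ∉ D := fun h => by simp [r, h] at hu
    have huS : u ∉ S := fun h => by simp [r, h, huD] at hu
    obtain ⟨v, hvD, huv⟩ := hD u huD huS
    exact ⟨v, huv, by simp [r, hvD]⟩
  refine (romanNumber_le hr).trans ?_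
  calc romanWeight r
      ≤ ∑ u, (2 * (if u ∈ D then 1 else 0) + (if u ∈ S then 1 else 0)) :=
        Finset.sum_le_sum fun u _ => by
          by_cases hD : u ∈ D <;> by_cases hS : u ∈ S <;> simp [r, hD, hS]
    _ = 2 * D.card + S.card := by
        simp only [Finset.sum_add_distrib, ← Finset.mul_sum, Finset.sum_boole,
          Finset.filter_mem_eq_inter, Finset.univ_inter, Nat.cast_id]

lemma card_le_romanWeight {r : V → Fin 3} (hr : ∀ u, r u ≠ 0) :
    Fintype.card V ≤ romanWeight r := by
  simpa [romanWeight] using Finset.card_nsmul_le_sum Finset.univ (fun u => (r u : ℕ)) 1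
    fun u _ => Nat.one_le_iff_ne_zero.mpr fun h => hr u (Fin.ext h)

/-- Each non-neighbour `t` of the `2`-vertex `w` either carries weight itself or needs a second
`2`-vertex. -/
lemma IsRomanFn.min_le_romanWeight_of_eq_two {r : V → Fin 3} (hr : IsRomanFn G r) {w : V}
    (hw : r w = 2) (T : Finset V) (hT : ∀ t ∈ T, Gᶜ.Adj w t) :
    min 4 (T.card + 2) ≤ romanWeight r := by
  classical
  by_cases hzero : ∃ t ∈ T, r t = 0
  · obtain ⟨t, htT, ht⟩ := hzero
    obtain ⟨s, hts, hs⟩ := hr t ht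
    have hws : w ≠ s := by
      rintro rfl
      exact ((compl_adj G w t).mp (hT t htT)).2 hts.symm
    have := sum_le_romanWeight r {w, s}
    rw [Finset.sum_pair hws, hw, hs] at this
    exact min_le_of_left_le this
  · push Not at hzero
    have hwT : w ∉ T := fun h => (hT w h).ne rfl
    have hT1 : T.card ≤ ∑ t ∈ T, (r t : ℕ) := by
      simpa using Finset.card_nsmul_le_sum T (fun u => (r u : ℕ)) 1
        fun t ht => Nat.one_le_iff_ne_zero.mpr fun h => hzero t ht (Fin.ext h)
    have := sum_le_romanWeight r (insert w T)
    rw [Finset.sum_insert hwT, hw] at this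
    exact min_le_of_right_le (by simp at this; omega)

lemma min_le_romanNumber_of_compl_adj {k : ℕ}
    (hk : ∀ w, ∃ T : Finset V, T.card = k ∧ ∀ t ∈ T, Gᶜ.Adj w t) :
    min (Fintype.card V) (min 4 (k + 2)) ≤ romanNumber G := by
  refine le_romanNumber fun r hr => ?_
  by_cases hzero : ∃ u, r u = 0
  · obtain ⟨u, hu⟩ := hzero
    obtain ⟨w, -, hw⟩ := hr u hu
    obtain ⟨T, rfl, hT⟩ := hk w
    exact min_le_of_right_le (hr.min_le_romanWeight_of_eq_two hw T hT)
  · push Not at hzero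
    exact min_le_of_left_le (card_le_romanWeight hzero)

end Roman

lemma ZMod.ofNat_ne_zero_of_lt {n : ℕ} (k : ℕ) [k.AtLeastTwo] (hkn : k < n) :
    (ofNat(k) : ZMod n) ≠ 0 := by
  rw [← Nat.cast_ofNat, Ne, ZMod.natCast_eq_zero_iff]
  change ¬n ∣ k
  exact fun hdvd => hkn.not_ge (Nat.le_of_dvd (by have := ‹k.AtLeastTwo›.prop; omega) hdvd)

section Xgraph

variable {n : ℕ}

lemma Xgraph_compl_adj_add_two (h2 : (2 : ZMod n) ≠ 0) (i : ZMod n) :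
    (Xgraph n)ᶜ.Adj i (i + 2) :=
  (compl_adj _ _ _).mpr ⟨fun h => h2 (by linear_combination -h), fun h => h.2.1 rfl⟩

lemma Xgraph_compl_adj_sub_two (h2 : (2 : ZMod n) ≠ 0) (i : ZMod n) :
    (Xgraph n)ᶜ.Adj i (i - 2) :=
  (compl_adj _ _ _).mpr ⟨fun h => h2 (by linear_combination h), fun h => h.2.2 rfl⟩

variable [NeZero n]

lemma romanNumber_Xgraph_le (hn : 6 ≤ n) : romanNumber (Xgraph n) ≤ 4 := by
  have : Fact (1 < n) := ⟨by omega⟩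
  have h3 := ZMod.ofNat_ne_zero_of_lt (n := n) 3 (by omega)
  have h5 := ZMod.ofNat_ne_zero_of_lt (n := n) 5 (by omega)
  have := romanNumber_le_of_dominating (G := Xgraph n) {0, 1} ∅ fun u hu _ => ?_
  · simpa [Finset.card_pair zero_ne_one] using this
  simp only [Finset.mem_insert, Finset.mem_singleton, not_or] at hu
  by_cases hu2 : u = 2 ∨ u = -2
  · refine ⟨1, by simp, ?_⟩
    rcases hu2 with rfl | rfl
    · exact ⟨hu.2, fun h => h3 (by linear_combination -h),
        fun h => one_ne_zero (by linear_combination h)⟩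
    · exact ⟨hu.2, fun h => one_ne_zero (by linear_combination h),
        fun h => h5 (by linear_combination h)⟩
  · push Not at hu2
    exact ⟨0, by simp, hu.1, fun h => hu2.2 (by linear_combination -h),
      fun h => hu2.1 (by linear_combination -h)⟩

lemma le_romanNumber_Xgraph (hn : 6 ≤ n) : 4 ≤ romanNumber (Xgraph n) := by
  have h2 := ZMod.ofNat_ne_zero_of_lt (n := n) 2 (by omega)
  have h4 := ZMod.ofNat_ne_zero_of_lt (n := n) 4 (by omega)
  refine le_trans (le_of_eq ?_) (min_le_romanNumber_of_compl_adj (k := 2) fun i =>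
    ⟨{i + 2, i - 2}, Finset.card_pair fun h => h4 (by linear_combination h), fun t ht => ?_⟩)
  · rw [ZMod.card]
    omega
  · simp only [Finset.mem_insert, Finset.mem_singleton] at ht
    rcases ht with rfl | rfl
    exacts [Xgraph_compl_adj_add_two h2 i, Xgraph_compl_adj_sub_two h2 i]

lemma romanNumber_Xgraph (hn : 6 ≤ n) : romanNumber (Xgraph n) = 4 :=
  le_antisymm (romanNumber_Xgraph_le hn) (le_romanNumber_Xgraph hn)

lemma romanNumber_Xgraph_induce_ne_le (hn : 6 ≤ n) (v : ZMod n) :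
    romanNumber ((Xgraph n).induce {u | u ≠ v}) ≤ 3 := by
  have h2 := ZMod.ofNat_ne_zero_of_lt (n := n) 2 (by omega)
  have h4 := ZMod.ofNat_ne_zero_of_lt (n := n) 4 (by omega)
  have := romanNumber_le_of_dominating (G := (Xgraph n).induce {u | u ≠ v})
    {⟨v + 2, fun h => h2 (by linear_combination h)⟩}
    {⟨v + 4, fun h => h4 (by linear_combination h)⟩}
    fun u hu hu' => ⟨_, Finset.mem_singleton_self _, ?_⟩
  · simpa using this
  simp only [Finset.mem_singleton, Subtype.ext_iff] at hu hu'
  show (Xgraph n).Adj u (v + 2)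
  exact ⟨hu, fun h => u.2 (by linear_combination -h), fun h => hu' (by linear_combination -h)⟩

lemma le_romanNumber_Xgraph_induce_ne (hn : 6 ≤ n) (v : ZMod n) :
    3 ≤ romanNumber ((Xgraph n).induce {u | u ≠ v}) := by
  have h2 := ZMod.ofNat_ne_zero_of_lt (n := n) 2 (by omega)
  have h4 := ZMod.ofNat_ne_zero_of_lt (n := n) 4 (by omega)
  refine le_trans (le_of_eq ?_) (min_le_romanNumber_of_compl_adj (k := 1) fun w => ?_)
  · rw [Set.card_ne_eq, ZMod.card]
    omega
  obtain ⟨t, htv, hwt⟩ : ∃ t, t ≠ v ∧ (Xgraph n)ᶜ.Adj w t := by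
    by_cases hv : (w : ZMod n) + 2 = v
    · exact ⟨w - 2, fun h => h4 (by linear_combination hv - h), Xgraph_compl_adj_sub_two h2 w⟩
    · exact ⟨w + 2, hv, Xgraph_compl_adj_add_two h2 w⟩
  refine ⟨{⟨t, htv⟩}, Finset.card_singleton _, fun s hs => ?_⟩
  rw [Finset.mem_singleton.mp hs]
  exact compl_induce_adj hwt

lemma romanNumber_Xgraph_induce_ne (hn : 6 ≤ n) (v : ZMod n) :
    romanNumber ((Xgraph n).induce {u | u ≠ v}) = 3 :=
  le_antisymm (romanNumber_Xgraph_induce_ne_le hn v) (le_romanNumber_Xgraph_induce_ne hn v)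

end Xgraph

/-- for every `n ≥ 6`, `X_n` is a nonelementary v-critical graph with
γ_R(X_n) = 4. -/
theorem Xgraph_vCritical (n : ℕ) [NeZero n] (hn : 6 ≤ n) :
    romanNumber (Xgraph n) < Fintype.card (ZMod n) ∧
    VCritical (Xgraph n) ∧ romanNumber (Xgraph n) = 4 := by
  have h4 := romanNumber_Xgraph hn
  refine ⟨by rw [h4, ZMod.card]; omega, fun v => ?_, h4⟩
  rw [romanNumber_Xgraph_induce_ne hn v, h4]
end
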